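/- Let $X$ be a Banach space, $T, U : X \to \mathbb{R}$ continuous with $T \geq 0$, $T(0)=U(0)=0$, $F = T - U$, $i_\lambda = \inf\{T(u): U(u)=\lambda\}$, and $\lambda^{**} = \inf\{\lambda > 0 : i_\lambda - \lambda < 0\} > 0$. Assume $i_\lambda - \lambda \geq 0$ for all $\lambda \in (0, \lambda^{**}]$, and there is a continuous $\gamma : [0,\infty)\to X$ with $U(\gamma(\lambda))=\lambda$, $T(\gamma(\lambda))=i_\lambda$ for $\lambda > 0$, and $\gamma(0)=0$. Let $c$ be the mountain pass level over paths $\eta$ with $\eta(0)=0$, $F(\eta(1))<0$. Then $c \geq \sup_{\lambda \in (0,\lambda^{**})}(i_\lambda - \lambda)$. -/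

import Mathlib

/-!
An admissible path `η` starts on the level `U = 0` and ends at a point where `T < U`; such an
endpoint lies on a level `U = λ` with `i_λ - λ < 0`, so its `U`-value is at least `λ**`.
By the intermediate value theorem the path therefore meets every level `U = λ` with
`0 < λ < λ**`, and at the crossing point `F = T - λ ≥ i_λ - λ`. The path `λ ↦ γ(λ)` of minimizers,
followed up to a level where `i_λ - λ < 0`, shows that admissible paths exist.
-/

open Set

section MountainPass

variable {X : Type*}

noncomputable def levelInf (T U : X → ℝ) (l : ℝ) : ℝ := sInf (T '' {u | U u = l})

noncomputable def criticalLevel (T U : X → ℝ) : ℝ := sInf {l : ℝ | 0 < l ∧ levelInf T U l - l < 0}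

def mountainPassValues [TopologicalSpace X] [Zero X] (F : X → ℝ) : Set ℝ :=
  {m | ∃ η : ℝ → X, ContinuousOn η (Icc 0 1) ∧ η 0 = 0 ∧
    F (η 1) < 0 ∧ m = sSup ((fun t => F (η t)) '' Icc 0 1)}

variable {T U : X → ℝ}

theorem levelInf_le (hT : ∀ u, 0 ≤ T u) (u : X) : levelInf T U (U u) ≤ T u :=
  csInf_le ⟨0, by rintro _ ⟨v, -, rfl⟩; exact hT v⟩ ⟨u, rfl, rfl⟩

theorem criticalLevel_le_of_lt (hT : ∀ u, 0 ≤ T u) {u : X} (hu : T u < U u) :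
    criticalLevel T U ≤ U u :=
  csInf_le ⟨0, fun _ hl => hl.1.le⟩
    ⟨(hT u).trans_lt hu, by linarith [levelInf_le (U := U) hT u]⟩

theorem nonempty_of_criticalLevel_pos (h : 0 < criticalLevel T U) :
    {l : ℝ | 0 < l ∧ levelInf T U l - l < 0}.Nonempty :=
  nonempty_iff_ne_empty.2 fun hempty => h.ne' (by rw [criticalLevel, hempty, Real.sInf_empty])

variable [TopologicalSpace X] [Zero X]

theorem mountainPassValues_nonempty {F : X → ℝ} {γ : ℝ → X} (hγ : ContinuousOn γ (Ici 0))
    (hγ0 : γ 0 = 0) {l : ℝ} (hl : 0 < l) (hFl : F (γ l) < 0) :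
    (mountainPassValues F).Nonempty := by
  refine ⟨_, fun t => γ (t * l), ?_, by simp [hγ0], by simpa using hFl, rfl⟩
  exact hγ.comp (continuous_mul_const l).continuousOn fun t ht => mul_nonneg ht.1 hl.le

theorem levelInf_sub_le_of_mem_mountainPassValues (hT : Continuous T) (hU : Continuous U)
    (hTnonneg : ∀ u, 0 ≤ T u) (hU0 : U 0 = 0) {l m : ℝ} (hl : l ∈ Ioo 0 (criticalLevel T U))
    (hm : m ∈ mountainPassValues (T - U)) : levelInf T U l - l ≤ m := by
  obtain ⟨η, hη, hη0, hη1, rfl⟩ := hm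
  have hcrit : criticalLevel T U ≤ U (η 1) := criticalLevel_le_of_lt hTnonneg (sub_neg.1 hη1)
  obtain ⟨t, ht, hUt⟩ : ∃ t ∈ Icc (0 : ℝ) 1, U (η t) = l :=
    intermediate_value_Icc zero_le_one (hU.comp_continuousOn hη)
      ⟨by simp [hη0, hU0, hl.1.le], hl.2.le.trans hcrit⟩
  calc levelInf T U l - l ≤ (T - U) (η t) := by
        rw [← hUt, Pi.sub_apply]; exact sub_le_sub_right (levelInf_le hTnonneg _) _
    _ ≤ _ := ((hT.sub hU).comp_continuousOn hη).le_sSup_image_Icc ht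

end MountainPass

theorem mountain_pass_lower_bound_general
    {X : Type*} [NormedAddCommGroup X]
    (T U : X → ℝ) (hT : Continuous T) (hU : Continuous U)
    (hTnonneg : ∀ u, 0 ≤ T u) (hU0 : U 0 = 0)
    (F : X → ℝ) (hF : ∀ u, F u = T u - U u)
    (i : ℝ → ℝ) (hi : ∀ l : ℝ, i l = sInf (T '' {u | U u = l}))
    (lss : ℝ) (hlss : lss = sInf {l : ℝ | 0 < l ∧ i l - l < 0})
    (hlsspos : 0 < lss)
    (γ : ℝ → X) (hγcont : ContinuousOn γ (Ici 0)) (hγ0 : γ 0 = 0)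
    (hγ : ∀ l : ℝ, 0 < l → U (γ l) = l ∧ T (γ l) = i l)
    (c : ℝ)
    (hc : c = sInf {m : ℝ | ∃ η : ℝ → X, ContinuousOn η (Icc 0 1) ∧ η 0 = 0 ∧
            F (η 1) < 0 ∧ m = sSup ((fun t => F (η t)) '' Icc 0 1)}) :
    sSup ((fun l => i l - l) '' Ioo 0 lss) ≤ c := by
  obtain rfl : i = levelInf T U := funext hi
  obtain rfl : F = T - U := funext hF
  obtain rfl : lss = criticalLevel T U := hlss
  obtain rfl : c = sInf (mountainPassValues (T - U)) := hc
  obtain ⟨l₀, hl₀, hl₀neg⟩ := nonempty_of_criticalLevel_pos hlsspos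
  have hne : (mountainPassValues (T - U)).Nonempty := by
    refine mountainPassValues_nonempty hγcont hγ0 hl₀ ?_
    rwa [Pi.sub_apply, (hγ l₀ hl₀).1, (hγ l₀ hl₀).2]
  refine csSup_le ((nonempty_Ioo.2 hlsspos).image _) ?_
  rintro _ ⟨l, hl, rfl⟩
  exact le_csInf hne fun m hm =>
    levelInf_sub_le_of_mem_mountainPassValues hT hU hTnonneg hU0 hl hm

/-- Lower-bound half of the max-min characterization: the mountain pass level `c`
is at least the supremum over `λ ∈ (0, λ**)` of `i λ - λ`. -/
theorem mountain_pass_lower_bound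
    {X : Type*} [NormedAddCommGroup X] [NormedSpace ℝ X] [CompleteSpace X]
    (T U : X → ℝ) (hT : Continuous T) (hU : Continuous U)
    (hTnonneg : ∀ u, 0 ≤ T u) (hT0 : T 0 = 0) (hU0 : U 0 = 0)
    (F : X → ℝ) (hF : ∀ u, F u = T u - U u)
    (i : ℝ → ℝ) (hi : ∀ l : ℝ, i l = sInf (T '' {u | U u = l}))
    (lss : ℝ) (hlss : lss = sInf {l : ℝ | 0 < l ∧ i l - l < 0})
    (hlsspos : 0 < lss)
    (hnonneg : ∀ l ∈ Ioc (0:ℝ) lss, 0 ≤ i l - l)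
    (γ : ℝ → X) (hγcont : ContinuousOn γ (Ici 0)) (hγ0 : γ 0 = 0)
    (hγ : ∀ l : ℝ, 0 < l → U (γ l) = l ∧ T (γ l) = i l)
    (c : ℝ)
    (hc : c = sInf {m : ℝ | ∃ η : ℝ → X, ContinuousOn η (Icc 0 1) ∧ η 0 = 0 ∧
            F (η 1) < 0 ∧ m = sSup ((fun t => F (η t)) '' Icc 0 1)}) :
    sSup ((fun l => i l - l) '' Ioo 0 lss) ≤ c :=
  mountain_pass_lower_bound_general T U hT hU hTnonneg hU0 F hF i hi lss hlss hlsspos γ hγcont hγ0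
    hγ c hc
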